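/- arXiv:1112.0269 — 6 statements merged into one kernel-verified Lean document; each statement's English description precedes it below -/
import Mathlib

section
/- Suppose x, w : ℝ → ℝ are differentiable, x(0) = w(0) = 1/2, w'(t) = -λ̄·g(w(t)) for all t, and x'(t) > -λ̄·g(x(t)) for all t, where g is locally Lipschitz and g < 0 on (0,1), and both x and w take values in (0,1). Then x(t) > w(t) for all t > 0 and x(t) < w(t) for all t < 0. -/
/-- If `f` is continuous, `f 0 = 0`, and near every zero of `f` the function is
negative to the left and positive to the right, then `f > 0` on `(0,∞)`. -/
lemma key_pos (f : ℝ → ℝ) (hc : Continuous f) (h0 : f 0 = 0)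
    (hz : ∀ t, f t = 0 → ∃ ε > 0, ∀ s, |s - t| < ε →
      (s < t → f s < 0) ∧ (t < s → 0 < f s)) :
    ∀ t > 0, 0 < f t := by
  intro t ht
  by_contra hle
  push_neg at hle
  obtain ⟨ε, hε, hloc⟩ := hz 0 h0
  have hpos : ∀ s, 0 < s → s < ε → 0 < f s := fun s hs hsε =>
    (hloc s (by rw [sub_zero, abs_of_pos hs]; exact hsε)).2 hs
  rcases lt_or_ge t ε with htε | htε
  · linarith [hpos t ht htε]
  set S := {s : ℝ | ε/2 ≤ s ∧ s ≤ t ∧ f s ≤ 0} with hS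
  have hSne : t ∈ S := ⟨by linarith, le_refl t, hle⟩
  have hSbdd : BddBelow S := ⟨ε/2, fun s hs => hs.1⟩
  have hSclosed : IsClosed S := by
    have : S = Set.Icc (ε/2) t ∩ f ⁻¹' Set.Iic 0 := by
      ext s; simp [hS, Set.mem_Icc, and_assoc]
    rw [this]
    exact isClosed_Icc.inter (isClosed_Iic.preimage hc)
  have ht1 := hSclosed.csInf_mem ⟨t, hSne⟩ hSbdd
  set t1 := sInf S with ht1def
  obtain ⟨ht1a, ht1b, ht1c⟩ := ht1
  have hbelow : ∀ s, ε/2 ≤ s → s < t1 → 0 < f s := by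
    intro s hs hst
    by_contra h
    push_neg at h
    have hmem : s ∈ S := ⟨hs, le_trans hst.le ht1b, h⟩
    exact absurd (csInf_le hSbdd hmem) (not_le.2 hst)
  have ht1half : ε/2 < t1 := by
    rcases lt_or_eq_of_le ht1a with h | h
    · exact h
    · exfalso; have := hpos (ε/2) (by linarith) (by linarith)
      rw [h] at this; linarith
  have hft1 : f t1 = 0 := by
    rcases lt_trichotomy (f t1) 0 with h | h | h
    · exfalso
      have hc' : ContinuousOn f (Set.Icc (ε/2) t1) := hc.continuousOn
      have hmem : (0:ℝ) ∈ Set.Icc (f t1) (f (ε/2)) :=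
        ⟨h.le, (hpos (ε/2) (by linarith) (by linarith)).le⟩
      obtain ⟨s, hs, hfs⟩ := intermediate_value_Icc' (by linarith : ε/2 ≤ t1) hc' hmem
      have hslt : s < t1 := lt_of_le_of_ne hs.2 (fun h' => by rw [h'] at hfs; linarith)
      have := hbelow s hs.1 hslt
      linarith
    · exact h
    · linarith
  obtain ⟨ε', hε', hloc'⟩ := hz t1 hft1
  set s := max (ε/2) (t1 - ε'/2) with hsdef
  have hs1 : ε/2 ≤ s := le_max_left _ _
  have hs2 : s < t1 := max_lt ht1half (by linarith)
  have hs3 : |s - t1| < ε' := by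
    rw [abs_sub_lt_iff]
    constructor
    · linarith
    · have := le_max_right (ε/2) (t1 - ε'/2); linarith
  have h1 := (hloc' s hs3).1 hs2
  have h2 := hbelow s hs1 hs2
  linarith

lemma key (f : ℝ → ℝ) (hc : Continuous f) (h0 : f 0 = 0)
    (hz : ∀ t, f t = 0 → ∃ ε > 0, ∀ s, |s - t| < ε →
      (s < t → f s < 0) ∧ (t < s → 0 < f s)) :
    (∀ t > 0, 0 < f t) ∧ (∀ t < 0, f t < 0) := by
  refine ⟨key_pos f hc h0 hz, ?_⟩
  have hneg := key_pos (fun t => -f (-t)) (by continuity) (by simp [h0]) ?_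
  · intro t ht
    have := hneg (-t) (by linarith)
    simpa using this
  · intro t ht0
    have hft : f (-t) = 0 := by simpa using ht0
    obtain ⟨ε, hε, hloc⟩ := hz (-t) hft
    refine ⟨ε, hε, fun s hs => ?_⟩
    have habs : |(-s) - (-t)| < ε := by
      rw [show (-s) - (-t) = -(s - t) by ring, abs_neg]; exact hs
    have := hloc (-s) habs
    constructor
    · intro hst
      have := this.2 (by linarith)
      simp only [neg_lt_zero]
      linarith
    · intro hts
      have := this.1 (by linarith)
      simp only [neg_pos]
      linarith

/-- Comparison argument: if w' = -λ̄ g(w), x' > -λ̄ g(x), x(0) = w(0) = 1/2,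
g locally Lipschitz and negative on (0,1), and x, w take values in (0,1),
then x > w on t > 0 and x < w on t < 0. -/
theorem stmt_5 (g x w : ℝ → ℝ) (lam : ℝ) (hlam : 0 < lam)
    (hgLip : LocallyLipschitz g)
    (hgneg : ∀ u ∈ Set.Ioo (0 : ℝ) 1, g u < 0)
    (hx0 : x 0 = 1 / 2) (hw0 : w 0 = 1 / 2)
    (hxrange : ∀ t, x t ∈ Set.Ioo (0 : ℝ) 1)
    (hwrange : ∀ t, w t ∈ Set.Ioo (0 : ℝ) 1)
    (hw : ∀ t, HasDerivAt w (-lam * g (w t)) t)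
    (hxdiff : Differentiable ℝ x)
    (hx : ∀ t, deriv x t > -lam * g (x t)) :
    (∀ t > 0, x t > w t) ∧ (∀ t < 0, x t < w t) := by
  set f : ℝ → ℝ := fun t => x t - w t with hf
  have hwdiff : Differentiable ℝ w := fun t => (hw t).differentiableAt
  have hfc : Continuous f := hxdiff.continuous.sub hwdiff.continuous
  have hf0 : f 0 = 0 := by simp [hf, hx0, hw0]
  have hz : ∀ t, f t = 0 → ∃ ε > 0, ∀ s, |s - t| < ε →
      (s < t → f s < 0) ∧ (t < s → 0 < f s) := by
    intro t ht0
    have hxw : x t = w t := by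
      have : x t - w t = 0 := ht0
      linarith
    have hdpos : 0 < deriv x t - (-lam * g (w t)) := by
      have := hx t; rw [← hxw]; linarith
    have hder : HasDerivAt f (deriv x t - (-lam * g (w t))) t :=
      ((hxdiff t).hasDerivAt).sub (hw t)
    have hslope := hasDerivAt_iff_tendsto_slope.1 hder
    have hev : ∀ᶠ s in nhdsWithin t {t}ᶜ, 0 < slope f t s :=
      hslope.eventually (eventually_gt_nhds hdpos)
    rw [eventually_nhdsWithin_iff, Metric.eventually_nhds_iff] at hev
    obtain ⟨ε, hε, h⟩ := hev
    refine ⟨ε, hε, fun s hs => ?_⟩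
    constructor <;> intro hlt
    · have hne : s ∈ ({t}ᶜ : Set ℝ) := by simp [ne_of_lt hlt]
      have hsl := h (by rwa [Real.dist_eq]) hne
      rw [slope_def_field, ht0, sub_zero] at hsl
      rcases div_pos_iff.1 hsl with ⟨_, hb⟩ | ⟨ha, _⟩
      · linarith
      · exact ha
    · have hne : s ∈ ({t}ᶜ : Set ℝ) := by simp [ne_of_gt hlt]
      have hsl := h (by rwa [Real.dist_eq]) hne
      rw [slope_def_field, ht0, sub_zero] at hsl
      rcases div_pos_iff.1 hsl with ⟨ha, _⟩ | ⟨_, hb⟩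
      · exact ha
      · linarith
  obtain ⟨hp, hn⟩ := key f hfc hf0 hz
  exact ⟨fun t ht => sub_pos.1 (hp t ht), fun t ht => sub_neg.1 (hn t ht)⟩
end

section
/- For r > 0, the value at x = 1 of the degree-3 Taylor polynomial h₃ʳ(x) = -rx + (r/(2r²+1))x² + (2r³/((2r²+1)²(3r²+1)))x³ equals -2r⁵(5 + 6r²)/((1+2r²)²(1+3r²)), which is negative and strictly decreasing as a function of r on (0,∞). -/
/-- The value at x = 1 of h₃ʳ equals -2r⁵(5+6r²)/((1+2r²)²(1+3r²)), which is
negative and strictly decreasing in r on (0,∞). -/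
theorem stmt_8 (f : ℝ → ℝ)
    (hf : f = fun r => -r * 1 + (r / (2 * r ^ 2 + 1)) * 1 ^ 2 +
      (2 * r ^ 3 / ((2 * r ^ 2 + 1) ^ 2 * (3 * r ^ 2 + 1))) * 1 ^ 3) :
    (∀ r > 0, f r = -2 * r ^ 5 * (5 + 6 * r ^ 2) /
        ((1 + 2 * r ^ 2) ^ 2 * (1 + 3 * r ^ 2)) ∧ f r < 0) ∧
    StrictAntiOn f (Set.Ioi 0) := by
  subst hf
  have key : ∀ r : ℝ, 0 < r →
      (fun r : ℝ => -r * 1 + (r / (2 * r ^ 2 + 1)) * 1 ^ 2 +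
        (2 * r ^ 3 / ((2 * r ^ 2 + 1) ^ 2 * (3 * r ^ 2 + 1))) * 1 ^ 3) r =
      -2 * r ^ 5 * (5 + 6 * r ^ 2) / ((1 + 2 * r ^ 2) ^ 2 * (1 + 3 * r ^ 2)) := by
    intro r hr
    have h1 : (2 * r ^ 2 + 1 : ℝ) ≠ 0 := by positivity
    have h2 : (3 * r ^ 2 + 1 : ℝ) ≠ 0 := by positivity
    have h3 : ((1 + 2 * r ^ 2) ^ 2 * (1 + 3 * r ^ 2) : ℝ) ≠ 0 := by positivity
    field_simp
    ring
  have neg : ∀ r : ℝ, 0 < r →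
      -2 * r ^ 5 * (5 + 6 * r ^ 2) / ((1 + 2 * r ^ 2) ^ 2 * (1 + 3 * r ^ 2)) < 0 := by
    intro r hr
    apply div_neg_of_neg_of_pos
    · nlinarith [pow_pos hr 5]
    · positivity
  refine ⟨fun r hr => ⟨key r hr, key r hr ▸ neg r hr⟩, ?_⟩
  intro a ha b hb hab
  simp only [Set.mem_Ioi] at ha hb
  rw [key a ha, key b hb]
  have hDa : (0:ℝ) < (1 + 2 * a ^ 2) ^ 2 * (1 + 3 * a ^ 2) := by positivity
  have hDb : (0:ℝ) < (1 + 2 * b ^ 2) ^ 2 * (1 + 3 * b ^ 2) := by positivity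
  rw [div_lt_div_iff₀ hDb hDa]
  have hQ : (0:ℝ) < 12 * a^6 + 10 * a^4 + 12 * a^5 * b + 10 * a^3 * b +
      84 * a^6 * b^2 + 10 * a^2 * b^2 + 82 * a^4 * b^2 + 84 * a^5 * b^3 +
      10 * a * b^3 + 82 * a^3 * b^3 + 10 * b^4 + 82 * a^2 * b^4 +
      244 * a^4 * b^4 + 192 * a^6 * b^4 + 72 * a^5 * b^5 + 12 * a * b^5 +
      84 * a^3 * b^5 + 12 * b^6 + 84 * a^2 * b^6 + 192 * a^4 * b^6 +
      144 * a^6 * b^6 := by positivity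
  nlinarith [mul_pos (sub_pos.mpr hab) hQ]
end

section
/- Let r > 0 and h₃(x) = -rx + (r/(2r²+1))x² + (2r³/((2r²+1)²(3r²+1)))x³. Then h₃(x) < 0 for all x ∈ (0, 1]. -/
/-- For r > 0 the cubic Taylor polynomial h₃ is negative on (0,1]. -/
theorem stmt_9 (r : ℝ) (hr : 0 < r) :
    ∀ x ∈ Set.Ioc (0 : ℝ) 1,
      -r * x + (r / (2 * r ^ 2 + 1)) * x ^ 2 +
        (2 * r ^ 3 / ((2 * r ^ 2 + 1) ^ 2 * (3 * r ^ 2 + 1))) * x ^ 3 < 0 := by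
  rintro x ⟨hx0, hx1⟩
  have hD : (0:ℝ) < (2 * r ^ 2 + 1) ^ 2 * (3 * r ^ 2 + 1) := by positivity
  have hd1 : (2 * r ^ 2 + 1 : ℝ) ≠ 0 := by positivity
  have heq : -r * x + (r / (2 * r ^ 2 + 1)) * x ^ 2 +
        (2 * r ^ 3 / ((2 * r ^ 2 + 1) ^ 2 * (3 * r ^ 2 + 1))) * x ^ 3
      = (-(r * x) * ((2 * r ^ 2 + 1) ^ 2 * (3 * r ^ 2 + 1))
          + r * x ^ 2 * ((2 * r ^ 2 + 1) * (3 * r ^ 2 + 1))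
          + 2 * r ^ 3 * x ^ 3) / ((2 * r ^ 2 + 1) ^ 2 * (3 * r ^ 2 + 1)) := by
    field_simp
  rw [heq]
  apply div_neg_of_neg_of_pos _ hD
  have hfac : -(r * x) * ((2 * r ^ 2 + 1) ^ 2 * (3 * r ^ 2 + 1))
          + r * x ^ 2 * ((2 * r ^ 2 + 1) * (3 * r ^ 2 + 1))
          + 2 * r ^ 3 * x ^ 3
      = r * x * (-(((2 * r ^ 2 + 1) ^ 2 * (3 * r ^ 2 + 1)))
          + x * ((2 * r ^ 2 + 1) * (3 * r ^ 2 + 1)) + 2 * r ^ 2 * x ^ 2) := by ring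
  rw [hfac]
  apply mul_neg_of_pos_of_neg (mul_pos hr hx0)
  have h1 : x * ((2 * r ^ 2 + 1) * (3 * r ^ 2 + 1)) ≤ (2 * r ^ 2 + 1) * (3 * r ^ 2 + 1) := by
    nlinarith [sq_nonneg r]
  have hx2 : x ^ 2 ≤ 1 := by nlinarith
  have h2 : 2 * r ^ 2 * x ^ 2 ≤ 2 * r ^ 2 := by nlinarith [mul_nonneg (sq_nonneg r) (sub_nonneg.mpr hx2)]
  nlinarith [sq_nonneg r, sq_nonneg (r^2), mul_pos hr hr]
end

section
/- Let r > 0, h₃(x) = -rx + (r/(2r²+1))x² + (2r³/((2r²+1)²(3r²+1)))x³, and Z(x,y) = (-y, (r - 1/r)y + x(x-1)). Then the scalar product ⟨∇F₃(x,y), Z(x,y)⟩ evaluated at y = h₃(x), where F₃(x,y) = y - h₃(x), equals 10r⁴x⁴/((1+2r²)³(1+3r²)) + 12r⁶x⁵/((1+2r²)⁴(1+3r²)²), and is strictly positive for x > 0. -/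
/-- ⟨∇F₃(x,y), Z(x,y)⟩ on y = h₃(x) equals the stated positive expression,
where F₃(x,y) = y - h₃(x) and Z(x,y) = (-y, (r-1/r)y + x(x-1)). -/
theorem stmt_10 (r : ℝ) (hr : 0 < r) (h₃ h₃' : ℝ → ℝ)
    (hh₃ : h₃ = fun x => -r * x + (r / (2 * r ^ 2 + 1)) * x ^ 2 +
      (2 * r ^ 3 / ((2 * r ^ 2 + 1) ^ 2 * (3 * r ^ 2 + 1))) * x ^ 3)
    (hh₃' : h₃' = fun x => -r + 2 * (r / (2 * r ^ 2 + 1)) * x +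
      3 * (2 * r ^ 3 / ((2 * r ^ 2 + 1) ^ 2 * (3 * r ^ 2 + 1))) * x ^ 2) :
    (∀ x : ℝ,
      (-h₃' x) * (-(h₃ x)) + 1 * ((r - 1 / r) * h₃ x + x * (x - 1)) =
        10 * r ^ 4 * x ^ 4 / ((1 + 2 * r ^ 2) ^ 3 * (1 + 3 * r ^ 2)) +
        12 * r ^ 6 * x ^ 5 / ((1 + 2 * r ^ 2) ^ 4 * (1 + 3 * r ^ 2) ^ 2)) ∧
    (∀ x > 0,
      0 < (-h₃' x) * (-(h₃ x)) + 1 * ((r - 1 / r) * h₃ x + x * (x - 1))) := by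
  have hr' : r ≠ 0 := hr.ne'
  have h1 : (2 * r ^ 2 + 1 : ℝ) ≠ 0 := by positivity
  have h2 : (3 * r ^ 2 + 1 : ℝ) ≠ 0 := by positivity
  have h3 : (1 + 2 * r ^ 2 : ℝ) ≠ 0 := by positivity
  have h4 : (1 + 3 * r ^ 2 : ℝ) ≠ 0 := by positivity
  have key : ∀ x : ℝ,
      (-h₃' x) * (-(h₃ x)) + 1 * ((r - 1 / r) * h₃ x + x * (x - 1)) =
        10 * r ^ 4 * x ^ 4 / ((1 + 2 * r ^ 2) ^ 3 * (1 + 3 * r ^ 2)) +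
        12 * r ^ 6 * x ^ 5 / ((1 + 2 * r ^ 2) ^ 4 * (1 + 3 * r ^ 2) ^ 2) := by
    intro x
    subst hh₃ hh₃'
    simp only
    field_simp
    ring
  refine ⟨key, fun x hx => ?_⟩
  rw [key x]
  positivity
end

section
/- For r > 0 let Φ = e^{rt}, X(t) = ((2+2√2)Φ + Φ²)·((1+√2+Φ)²)^{-1} (i.e., with α = 1-β, β = 2√2-2 in the general ansatz), and Y(t) = -X'(t). Then the quantity M(t) = -Y'(t)·(-Y(t)) + X'(t)·((r - 1/r)Y(t) + X(t)(X(t)-1)) equals 2(17 + 12√2)·r·(1 - 6r²)·Φ³/(1 + √2 + Φ)⁷. In particular M(t) has the sign of (1 - 6r²) for all t. -/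
open Real

/-- With X(t) = ((2+2√2)Φ + Φ²)/(1+√2+Φ)², Φ = e^{rt}, Y = -X', the quantity
M(t) = -Y'·(-Y) + X'·((r-1/r)Y + X(X-1)) equals
2(17+12√2) r (1-6r²) Φ³/(1+√2+Φ)⁷; in particular M has the sign of 1-6r². -/
theorem stmt_14 (r : ℝ) (hr : 0 < r) (X Y M : ℝ → ℝ)
    (hX : X = fun t =>
      ((2 + 2 * Real.sqrt 2) * Real.exp (r * t) + Real.exp (r * t) ^ 2) /
        (1 + Real.sqrt 2 + Real.exp (r * t)) ^ 2)
    (hY : Y = fun t => -deriv X t)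
    (hM : M = fun t =>
      -deriv Y t * (-(Y t)) +
        deriv X t * ((r - 1 / r) * Y t + X t * (X t - 1))) :
    (∀ t, M t = 2 * (17 + 12 * Real.sqrt 2) * r * (1 - 6 * r ^ 2) *
        Real.exp (r * t) ^ 3 / (1 + Real.sqrt 2 + Real.exp (r * t)) ^ 7) ∧
    (∀ t, Real.sign (M t) = Real.sign (1 - 6 * r ^ 2)) := by
  have hs2 : Real.sqrt 2 ^ 2 = 2 := Real.sq_sqrt (by norm_num)
  set s := Real.sqrt 2 with hsdef
  have hs0 : 0 < s := Real.sqrt_pos.mpr (by norm_num)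
  have hΦ : ∀ t : ℝ, HasDerivAt (fun t => Real.exp (r * t)) (Real.exp (r * t) * r) t := by
    intro t
    simpa using ((hasDerivAt_id t).const_mul r).exp
  have hXd : ∀ t, HasDerivAt X
      (2 * (1 + s) ^ 2 * r * Real.exp (r * t) / (1 + s + Real.exp (r * t)) ^ 3) t := by
    intro t
    have he : 0 < Real.exp (r * t) := Real.exp_pos _
    have hN := ((hΦ t).const_mul (2 + 2 * s)).add ((hΦ t).pow 2)
    have hD := ((hasDerivAt_const t ((1:ℝ) + s)).add (hΦ t)).pow 2
    have hDne : (1 + s + Real.exp (r * t)) ^ 2 ≠ 0 := by positivity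
    have h := hN.div hD hDne
    rw [hX]
    refine h.congr_deriv ?_
    simp only [Pi.add_apply, Pi.pow_apply]
    have hne : (1 : ℝ) + s + Real.exp (r * t) ≠ 0 := by positivity
    field_simp
    ring
  have hYfun : Y = fun t =>
      -(2 * (1 + s) ^ 2 * r * Real.exp (r * t) / (1 + s + Real.exp (r * t)) ^ 3) := by
    funext t
    simp only [hY]
    rw [(hXd t).deriv]
  have hYd : ∀ t, HasDerivAt Y
      (-(2 * (1 + s) ^ 2 * r ^ 2 * Real.exp (r * t) * (1 + s - 2 * Real.exp (r * t))
        / (1 + s + Real.exp (r * t)) ^ 4)) t := by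
    intro t
    have he : 0 < Real.exp (r * t) := Real.exp_pos _
    have hN := (hΦ t).const_mul (2 * (1 + s) ^ 2 * r)
    have hD := ((hasDerivAt_const t ((1:ℝ) + s)).add (hΦ t)).pow 3
    have hDne : (1 + s + Real.exp (r * t)) ^ 3 ≠ 0 := by positivity
    have h := ((hN.div hD hDne)).neg
    rw [hYfun]
    refine h.congr_deriv ?_
    simp only [Pi.add_apply, Pi.pow_apply]
    have hne : (1 : ℝ) + s + Real.exp (r * t) ≠ 0 := by positivity
    field_simp
    ring
  have key : ∀ t, M t = 2 * (17 + 12 * s) * r * (1 - 6 * r ^ 2) *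
      Real.exp (r * t) ^ 3 / (1 + s + Real.exp (r * t)) ^ 7 := by
    intro t
    have hc4 : (1 + s) ^ 4 = 17 + 12 * s := by nlinarith [hs2]
    have he : 0 < Real.exp (r * t) := Real.exp_pos _
    have hne : (1 : ℝ) + s + Real.exp (r * t) ≠ 0 := by positivity
    have hrne : r ≠ 0 := ne_of_gt hr
    rw [hM]
    simp only [(hXd t).deriv, (hYd t).deriv]
    simp only [hYfun, hX]
    rw [← hc4]
    field_simp
    ring
  refine ⟨key, fun t => ?_⟩
  rw [key t]
  have he : 0 < Real.exp (r * t) := Real.exp_pos _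
  have hA : 0 < 2 * (17 + 12 * s) * r * Real.exp (r * t) ^ 3
      / (1 + s + Real.exp (r * t)) ^ 7 := by positivity
  rcases lt_trichotomy (1 - 6 * r ^ 2) 0 with h | h | h
  · rw [Real.sign_of_neg h, Real.sign_of_neg]
    have hpos : 0 < 2 * (17 + 12 * s) * r * Real.exp (r * t) ^ 3 := by positivity
    have hnum : 2 * (17 + 12 * s) * r * (1 - 6 * r ^ 2) * Real.exp (r * t) ^ 3 < 0 := by
      have heq : 2 * (17 + 12 * s) * r * (1 - 6 * r ^ 2) * Real.exp (r * t) ^ 3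
          = (2 * (17 + 12 * s) * r * Real.exp (r * t) ^ 3) * (1 - 6 * r ^ 2) := by ring
      rw [heq]
      exact mul_neg_of_pos_of_neg hpos h
    exact div_neg_of_neg_of_pos hnum (by positivity)
  · rw [h]
    simp [h, Real.sign_zero]
  · rw [Real.sign_of_pos h, Real.sign_of_pos]
    have : 0 < 2 * (17 + 12 * s) * r * (1 - 6 * r ^ 2) * Real.exp (r * t) ^ 3 := by positivity
    positivity
end

section
/- The function u(x,t) = (3 + 2√2)/((1 + √2 + e^{(x - (5/√6)t)/√6})²) is an exact solution of the Fisher-Kolmogorov PDE u_t = u_xx + u(1-u), satisfying u → 1 as x → -∞ and u → 0 as x → +∞ (for fixed t). -/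
open Real Filter

/-- u(x,t) = (3+2√2)/((1+√2+e^{(x-(5/√6)t)/√6})²) solves u_t = u_xx + u(1-u)
and tends to 1 as x → -∞, to 0 as x → +∞ (for fixed t). -/
theorem stmt_15 (u : ℝ → ℝ → ℝ)
    (hu : u = fun x t =>
      (3 + 2 * Real.sqrt 2) /
        (1 + Real.sqrt 2 +
          Real.exp ((x - (5 / Real.sqrt 6) * t) / Real.sqrt 6)) ^ 2) :
    (∀ x t : ℝ,
      deriv (fun s => u x s) t =
        deriv (deriv (fun y => u y t)) x + u x t * (1 - u x t)) ∧
    (∀ t : ℝ, Tendsto (fun x => u x t) atBot (nhds 1) ∧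
      Tendsto (fun x => u x t) atTop (nhds 0)) := by
  have h2 : Real.sqrt 2 ^ 2 = 2 := Real.sq_sqrt (by norm_num)
  have h6 : Real.sqrt 6 ^ 2 = 6 := Real.sq_sqrt (by norm_num)
  have h6pos : (0:ℝ) < Real.sqrt 6 := Real.sqrt_pos.2 (by norm_num)
  have h6ne : Real.sqrt 6 ≠ 0 := ne_of_gt h6pos
  have h2pos : (0:ℝ) < Real.sqrt 2 := Real.sqrt_pos.2 (by norm_num)
  subst hu
  set a := Real.sqrt 2 with ha
  set r := Real.sqrt 6 with hr
  set B : ℝ := 1 + a with hBdef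
  set A : ℝ := 3 + 2 * a with hAdef
  have hBpos : 0 < B := by rw [hBdef]; linarith
  have hAB : A = B ^ 2 := by rw [hAdef, hBdef]; linear_combination -h2
  -- exp derivative in x direction
  have hEx : ∀ (y s : ℝ), HasDerivAt (fun y => Real.exp ((y - 5 / r * s) / r))
      (Real.exp ((y - 5 / r * s) / r) * (1 / r)) y := by
    intro y s
    have h1 : HasDerivAt (fun y : ℝ => (y - 5 / r * s) / r) (1 / r) y :=
      ((hasDerivAt_id y).sub_const _).div_const r
    exact (Real.hasDerivAt_exp _).comp y h1
  -- exp derivative in t direction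
  have hEt : ∀ (y s : ℝ), HasDerivAt (fun s => Real.exp ((y - 5 / r * s) / r))
      (Real.exp ((y - 5 / r * s) / r) * (-(5 / 6))) s := by
    intro y s
    have h1 : HasDerivAt (fun s : ℝ => (y - 5 / r * s) / r) (-(5 / r * 1) / r) s :=
      (((hasDerivAt_id s).const_mul (5 / r)).const_sub y).div_const r
    have h1' : -(5 / r * 1) / r = -(5 / 6) := by
      field_simp
      linear_combination h6
    rw [h1'] at h1
    exact (Real.hasDerivAt_exp _).comp s h1
  constructor
  · intro x t
    set E : ℝ := Real.exp ((x - 5 / r * t) / r) with hE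
    have hEpos : 0 < E := Real.exp_pos _
    have hne : B + E ≠ 0 := ne_of_gt (by positivity)
    -- time derivative
    have ht : HasDerivAt (fun s => A / (B + Real.exp ((x - 5 / r * s) / r)) ^ 2)
        ((0 * (B + E) ^ 2 - A * (2 * (B + E) ^ 1 * (E * (-(5 / 6))))) / ((B + E) ^ 2) ^ 2) t := by
      have hd : HasDerivAt (fun s => (B + Real.exp ((x - 5 / r * s) / r)) ^ 2)
          (2 * (B + E) ^ 1 * (E * (-(5 / 6)))) t := by
        simpa using (((hEt x t).const_add B).fun_pow 2)
      exact (hasDerivAt_const t A).div hd (by positivity)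
    -- first space derivative, as a function
    have hx1 : ∀ (y : ℝ), HasDerivAt (fun y => A / (B + Real.exp ((y - 5 / r * t) / r)) ^ 2)
        (-2 * A / r * (Real.exp ((y - 5 / r * t) / r)
          / (B + Real.exp ((y - 5 / r * t) / r)) ^ 3)) y := by
      intro y
      set F : ℝ := Real.exp ((y - 5 / r * t) / r) with hF
      have hFpos : 0 < F := Real.exp_pos _
      have hFne : B + F ≠ 0 := ne_of_gt (by positivity)
      have hd : HasDerivAt (fun y => (B + Real.exp ((y - 5 / r * t) / r)) ^ 2)
          (2 * (B + F) ^ 1 * (F * (1 / r))) y := by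
        simpa using (((hEx y t).const_add B).fun_pow 2)
      have h : HasDerivAt (fun y => A / (B + Real.exp ((y - 5 / r * t) / r)) ^ 2)
          ((0 * ((B + F) ^ 2) - A * (2 * (B + F) ^ 1 * (F * (1 / r)))) / ((B + F) ^ 2) ^ 2) y :=
        (hasDerivAt_const y A).div hd (by positivity)
      convert h using 1
      field_simp
      ring
    have hder1 : deriv (fun y => A / (B + Real.exp ((y - 5 / r * t) / r)) ^ 2)
        = fun y => -2 * A / r * (Real.exp ((y - 5 / r * t) / r)
          / (B + Real.exp ((y - 5 / r * t) / r)) ^ 3) := funext fun y => (hx1 y).deriv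
    -- second space derivative
    have hx2 : HasDerivAt (fun y => -2 * A / r * (Real.exp ((y - 5 / r * t) / r)
          / (B + Real.exp ((y - 5 / r * t) / r)) ^ 3))
        (2 * A / r ^ 2 * ((2 * E ^ 2 - B * E) / (B + E) ^ 4)) x := by
      have hd3 : HasDerivAt (fun y => (B + Real.exp ((y - 5 / r * t) / r)) ^ 3)
          (3 * (B + E) ^ 2 * (E * (1 / r))) x := by
        simpa using (((hEx x t).const_add B).fun_pow 3)
      have hq : HasDerivAt (fun y => Real.exp ((y - 5 / r * t) / r)
            / (B + Real.exp ((y - 5 / r * t) / r)) ^ 3)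
          ((E * (1 / r) * (B + E) ^ 3 - E * (3 * (B + E) ^ 2 * (E * (1 / r)))) / ((B + E) ^ 3) ^ 2)
          x := (hEx x t).div hd3 (by positivity)
      have h := hq.const_mul (-2 * A / r)
      refine h.congr_deriv ?_
      field_simp
      ring
    have key : ∀ b e : ℝ, 0 < b → 0 < e →
        (0 * (b + e) ^ 2 - b ^ 2 * (2 * (b + e) ^ 1 * (e * (-(5 / 6))))) / ((b + e) ^ 2) ^ 2 =
        2 * b ^ 2 / 6 * ((2 * e ^ 2 - b * e) / (b + e) ^ 4) +
          b ^ 2 / (b + e) ^ 2 * (1 - b ^ 2 / (b + e) ^ 2) := by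
      intro b e hb he
      have hbe : b + e ≠ 0 := by positivity
      field_simp
      ring
    rw [ht.deriv, hder1, hx2.deriv, h6, hAB]
    exact key B E hBpos hEpos
  · intro t
    have hBne2 : (B + 0 : ℝ) ^ 2 ≠ 0 := by positivity
    constructor
    · have harg : Tendsto (fun x : ℝ => (x - 5 / r * t) / r) atBot atBot := by
        apply Tendsto.atBot_div_const h6pos
        simpa [sub_eq_add_neg] using tendsto_atBot_add_const_right atBot (-(5 / r * t))
          (tendsto_id (α := ℝ))
      have hexp0 : Tendsto (fun x : ℝ => Real.exp ((x - 5 / r * t) / r)) atBot (nhds 0) :=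
        Real.tendsto_exp_atBot.comp harg
      have hcont : Tendsto (fun v : ℝ => A / (B + v) ^ 2) (nhds 0) (nhds (A / (B + 0) ^ 2)) := by
        apply ContinuousAt.tendsto
        exact ContinuousAt.div (by fun_prop) (by fun_prop) hBne2
      have := hcont.comp hexp0
      have hval : A / (B + 0) ^ 2 = 1 := by
        rw [add_zero, hAB]
        exact div_self (by positivity)
      rw [hval] at this
      simpa [Function.comp_def] using this
    · have harg : Tendsto (fun x : ℝ => (x - 5 / r * t) / r) atTop atTop := by
        apply Tendsto.atTop_div_const h6pos
        simpa [sub_eq_add_neg] using tendsto_atTop_add_const_right atTop (-(5 / r * t))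
          (tendsto_id (α := ℝ))
      have hexpT : Tendsto (fun x : ℝ => Real.exp ((x - 5 / r * t) / r)) atTop atTop :=
        Real.tendsto_exp_atTop.comp harg
      have hBT : Tendsto (fun x : ℝ => B + Real.exp ((x - 5 / r * t) / r)) atTop atTop :=
        tendsto_atTop_add_const_left atTop B hexpT
      have hpow : Tendsto (fun x : ℝ => (B + Real.exp ((x - 5 / r * t) / r)) ^ 2) atTop atTop :=
        (tendsto_pow_atTop (two_ne_zero)).comp hBT
      exact (tendsto_const_nhds (x := A)).div_atTop hpow
end
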